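/- For every positive integer k, the normalized map (1/k)·ρ_k is a multiplicative map on ℚ[ℚ/ℤ]: for all x, y one has ρ_k(x)·ρ_k(y) = k·ρ_k(x·y), where multiplication is the convolution product of the group algebra. -/

import Mathlib

/-!
`ρ_k` is the linear extension of `T a = fiberSum ℚ (nsmulAddMonoidHom k) a`, the sum of the fibre
of `b ↦ k • b` over `a`.
Multiplication by `k` on `ℚ/ℤ` is onto with kernel of order `k`, so every fibre is a coset of a
group of order `k`. Translating the fibre over `a'` by a point of the fibre over `a` gives the fibre
over `a + a'`, hence `T a * T a' = k • T (a + a')`, and bilinearity extends this to all of `ℚ[ℚ/ℤ]`.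
-/

abbrev QZ := AddCircle (1 : ℚ)
abbrev QQZ := AddMonoidAlgebra ℚ QZ

noncomputable def rho (k : ℕ) (x : QQZ) : QQZ :=
  Finsupp.sum x.coeff fun a c => c • ∑ᶠ b ∈ {b : QZ | k • b = a}, AddMonoidAlgebra.single b (1 : ℚ)

open AddMonoidAlgebra

section LinearCombination

variable {R M A : Type*} [CommSemiring R] [AddMonoid M] [Semiring A] [Algebra R A]

theorem linearCombination_coeff_mul_eq_smul {T : M → A} {r : R}
    (hT : ∀ a a', T a * T a' = r • T (a + a')) (x y : R[M]) :
    Finsupp.linearCombination R T x.coeff * Finsupp.linearCombination R T y.coeff =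
      r • Finsupp.linearCombination R T (x * y).coeff := by
  induction x using induction_linear with
  | zero => simp
  | add x x' hx hx' => simp only [add_mul, coeff_add, map_add, hx, hx', smul_add]
  | single a c =>
    induction y using induction_linear with
    | zero => simp
    | add y y' hy hy' => simp only [mul_add, coeff_add, map_add, hy, hy', smul_add]
    | single a' c' =>
      simp only [single_mul_single, coeff_single, Finsupp.linearCombination_single,
        smul_mul_smul_comm, hT, smul_comm r]

end LinearCombination

section FiberSum

variable (R : Type*) {G H : Type*} [CommSemiring R] [AddCommGroup G] [AddCommGroup H]

noncomputable def fiberSum (φ : G →+ H) (a : H) : R[G] :=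
  ∑ᶠ b ∈ φ ⁻¹' {a}, single b 1

variable {R} {φ : G →+ H}

theorem finite_preimage_singleton_of_surjective (hφ : Function.Surjective φ) [Finite φ.ker]
    (a : H) : (φ ⁻¹' {a}).Finite :=
  Finite.of_equiv _ (φ.fiberEquivKerOfSurjective hφ a).symm

theorem ncard_preimage_singleton_of_surjective (hφ : Function.Surjective φ) (a : H) :
    (φ ⁻¹' {a}).ncard = Nat.card φ.ker := by
  rw [← Nat.card_coe_set_eq, Nat.card_congr (φ.fiberEquivKerOfSurjective hφ a)]

theorem image_add_left_preimage_singleton (b : G) (a : H) :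
    (b + ·) '' (φ ⁻¹' {a}) = φ ⁻¹' {φ b + a} := by
  ext x
  simp [Set.image_add_left, neg_add_eq_iff_eq_add]

theorem single_mul_fiberSum (hφ : Function.Surjective φ) [Finite φ.ker] (b : G) (a : H) :
    single b 1 * fiberSum R φ a = fiberSum R φ (φ b + a) := by
  rw [fiberSum, fiberSum, mul_finsum_mem' _ _ (finite_preimage_singleton_of_surjective hφ a),
    ← image_add_left_preimage_singleton, finsum_mem_image (add_right_injective b).injOn]
  simp only [single_mul_single, mul_one]

theorem fiberSum_mul_fiberSum (hφ : Function.Surjective φ) [Finite φ.ker] (a a' : H) :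
    fiberSum R φ a * fiberSum R φ a' = Nat.card φ.ker • fiberSum R φ (a + a') := by
  have hfin := finite_preimage_singleton_of_surjective hφ a
  calc fiberSum R φ a * fiberSum R φ a'
      = ∑ᶠ b ∈ φ ⁻¹' {a}, fiberSum R φ (a + a') := by
        rw [fiberSum, finsum_mem_mul' _ _ hfin]
        refine finsum_mem_congr rfl fun b hb => ?_
        rw [single_mul_fiberSum hφ, (Set.mem_preimage.mp hb : φ b = a)]
    _ = Nat.card φ.ker • fiberSum R φ (a + a') := by
        rw [finsum_mem_eq_finite_toFinset_sum _ hfin, Finset.sum_const,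
          ← Set.ncard_eq_toFinset_card _ hfin, ncard_preimage_singleton_of_surjective hφ]

end FiberSum

namespace AddCircle

variable {𝕜 : Type*} [Field 𝕜] (p : 𝕜) {k : ℕ}

theorem nsmul_surjective (hk : (k : 𝕜) ≠ 0) :
    Function.Surjective (nsmulAddMonoidHom k : AddCircle p →+ AddCircle p) := by
  intro a
  obtain ⟨q, rfl⟩ := QuotientAddGroup.mk_surjective a
  refine ⟨((q / k : 𝕜) : AddCircle p), ?_⟩
  rw [nsmulAddMonoidHom_apply, ← coe_nsmul, nsmul_eq_mul, mul_div_cancel₀ _ hk]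

variable [LinearOrder 𝕜] [IsStrictOrderedRing 𝕜] [Fact (0 < p)]

theorem ker_nsmul_eq_zmultiples (hk : 0 < k) :
    (nsmulAddMonoidHom k : AddCircle p →+ AddCircle p).ker =
      AddSubgroup.zmultiples ((p / k : 𝕜) : AddCircle p) := by
  refine le_antisymm (fun u hu => ?_) (AddSubgroup.zmultiples_le.mpr ?_)
  · obtain ⟨m, -, rfl⟩ := (AddCircle.nsmul_eq_zero_iff hk).mp hu
    rw [natCast_div_mul_eq_nsmul]
    exact AddSubgroup.nsmul_mem _ (AddSubgroup.mem_zmultiples _) m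
  · have := addOrderOf_nsmul_eq_zero ((p / k : 𝕜) : AddCircle p)
    rwa [addOrderOf_period_div hk] at this

theorem card_ker_nsmul (hk : 0 < k) :
    Nat.card (nsmulAddMonoidHom k : AddCircle p →+ AddCircle p).ker = k := by
  rw [ker_nsmul_eq_zmultiples p hk, Nat.card_zmultiples, addOrderOf_period_div hk]

end AddCircle

theorem rho_eq_linearCombination (k : ℕ) (x : QQZ) :
    rho k x = Finsupp.linearCombination ℚ (fiberSum ℚ (nsmulAddMonoidHom k)) x.coeff := by
  rw [Finsupp.linearCombination_apply]
  rfl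

/-- `(1/k)·ρ_k` is multiplicative on ℚ[ℚ/ℤ]:
`ρ_k(x)·ρ_k(y) = k·ρ_k(x·y)` for the convolution product. -/
theorem rho_multiplicative (k : ℕ) (hk : 0 < k) :
    ∀ x y : QQZ, rho k x * rho k y = (k : ℚ) • rho k (x * y) := by
  have hcard : Nat.card (nsmulAddMonoidHom k : QZ →+ QZ).ker = k := AddCircle.card_ker_nsmul 1 hk
  have : Finite (nsmulAddMonoidHom k : QZ →+ QZ).ker := Nat.finite_of_card_ne_zero (by omega)
  intro x y
  simp only [rho_eq_linearCombination]
  refine linearCombination_coeff_mul_eq_smul (fun a a' => ?_) x y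
  rw [fiberSum_mul_fiberSum (AddCircle.nsmul_surjective 1 (Nat.cast_ne_zero.mpr hk.ne')), hcard,
    Nat.cast_smul_eq_nsmul]
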